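/- arXiv:2109.09066 — 3 statements merged into one kernel-verified Lean document; each statement's English description precedes it below -/
import Mathlib

section
/- For all s, t ∈ [0,1] one has Ξ(s,t) ≤ Ξ(t,t). -/
open MeasureTheory Set Real

/-! Both factors of `Ξ` are of the form `a sinh x + b cosh x` with `a, b ≥ 0`, which is nonnegative
and nondecreasing for `x ≥ 0`. Moving `s` to `t` raises `min s t` and lowers `max s t`, so it can
only increase both factors, while `1 / ϱ ≥ 0`. -/

lemma sinh_add_cosh_nonneg {a b x : ℝ} (ha : 0 ≤ a) (hb : 0 ≤ b) (hx : 0 ≤ x) :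
    0 ≤ a * sinh x + b * cosh x := by
  have := sinh_nonneg_iff.mpr hx
  positivity

lemma sinh_add_cosh_monotoneOn {a b : ℝ} (ha : 0 ≤ a) (hb : 0 ≤ b) :
    MonotoneOn (fun x => a * sinh x + b * cosh x) (Ici 0) := by
  intro x hx y hy hxy
  have hcosh : cosh x ≤ cosh y := by
    rwa [cosh_le_cosh, abs_of_nonneg hx, abs_of_nonneg hy]
  dsimp only
  gcongr
  exact sinh_le_sinh.mpr hxy

theorem stmt2_general
    (r0 α β γ δ : ℝ)
    (hr0 : 0 < r0) (hα : 0 ≤ α) (hβ : 0 ≤ β) (hγ : 0 ≤ γ) (hδ : 0 ≤ δ)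
    (ϱ : ℝ)
    (hϱ : ϱ = r0 ^ 2 * (α * δ + β * γ) * Real.cosh r0
            + r0 * (α * γ + β * δ * r0 ^ 2) * Real.sinh r0)
    (Ξ : ℝ → ℝ → ℝ)
    (hΞ : ∀ s t : ℝ, Ξ s t =
      (1 / ϱ) * (α * Real.sinh (r0 * min s t) + β * r0 * Real.cosh (r0 * min s t))
              * (γ * Real.sinh (r0 * (1 - max s t)) + δ * r0 * Real.cosh (r0 * (1 - max s t))))
    :
    ∀ s ∈ Set.Icc (0:ℝ) 1, ∀ t ∈ Set.Icc (0:ℝ) 1, Ξ s t ≤ Ξ t t := by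
  intro s hs t ht
  rw [hΞ, hΞ, min_self, max_self]
  have hβr0 : 0 ≤ β * r0 := by positivity
  have hδr0 : 0 ≤ δ * r0 := by positivity
  have hϱ0 : 0 ≤ ϱ := by
    have := sinh_nonneg_iff.mpr hr0.le
    rw [hϱ]
    positivity
  have hmin_le : r0 * min s t ≤ r0 * t := by gcongr; exact min_le_right s t
  have hmax_le : r0 * (1 - max s t) ≤ r0 * (1 - t) := by gcongr; exact le_max_right s t
  have hmin : 0 ≤ r0 * min s t := by have := le_min hs.1 ht.1; positivity
  have hmax : 0 ≤ r0 * (1 - max s t) := by have := max_le hs.2 ht.2; nlinarith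
  have hleft := sinh_add_cosh_monotoneOn hα hβr0 hmin (hmin.trans hmin_le) hmin_le
  have hright := sinh_add_cosh_monotoneOn hγ hδr0 hmax (hmax.trans hmax_le) hmax_le
  exact mul_le_mul (mul_le_mul_of_nonneg_left hleft (by positivity)) hright
    (sinh_add_cosh_nonneg hγ hδr0 hmax)
    (mul_nonneg (by positivity) (sinh_add_cosh_nonneg hα hβr0 (hmin.trans hmin_le)))

theorem stmt2
    (r0 α β γ δ : ℝ)
    (hr0 : 0 < r0) (hα : 0 ≤ α) (hβ : 0 ≤ β) (hγ : 0 ≤ γ) (hδ : 0 ≤ δ)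
    (hαβ : 0 < α + β) (hγδ : 0 < γ + δ)
    (ϱ : ℝ)
    (hϱ : ϱ = r0 ^ 2 * (α * δ + β * γ) * Real.cosh r0
            + r0 * (α * γ + β * δ * r0 ^ 2) * Real.sinh r0)
    (Ξ : ℝ → ℝ → ℝ)
    (hΞ : ∀ s t : ℝ, Ξ s t =
      (1 / ϱ) * (α * Real.sinh (r0 * min s t) + β * r0 * Real.cosh (r0 * min s t))
              * (γ * Real.sinh (r0 * (1 - max s t)) + δ * r0 * Real.cosh (r0 * (1 - max s t))))
    :
    ∀ s ∈ Set.Icc (0:ℝ) 1, ∀ t ∈ Set.Icc (0:ℝ) 1, Ξ s t ≤ Ξ t t :=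
  stmt2_general r0 α β γ δ hr0 hα hβ hγ hδ ϱ hϱ Ξ hΞ
end

section
/- Assume the function t ↦ Ξ(t,t)·ℓ(t) is integrable on (0,1). Then the operator ℵ : E → E is completely continuous: ℵ is continuous with respect to the sup norm, and the image under ℵ of every norm-bounded subset of E is relatively compact in C([0,1]). -/
/-!
Write `K(s, t) = Ξ(s, t) ℓ(t)`. The Green's function has the separated form
`c · P(min s t) · Q(1 - max s t)` with `P`, `Q` nonnegative and increasing on `[0, 1]`, so
`|K(s, t)| ≤ |Ξ(t, t) ℓ(t)|`, an integrable function of `t` alone. By dominated convergence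
`s ↦ K(s, ·)` is then continuous into `L¹`, hence the linear integral operator `L` with kernel `K`
is bounded on `C[0, 1]` and sends bounded sets to uniformly bounded equicontinuous ones: it is
compact by Arzelà–Ascoli. Now `ℵ = L ∘ g₁ ∘ L ∘ g₂ ∘ ⋯ ∘ L ∘ gₙ`, where each superposition
operator `f ↦ g ∘ f` is continuous and preserves bounded sets; so `ℵ` is continuous, and since
its last factor is the compact operator `L`, it maps bounded sets to relatively compact ones.
-/

open MeasureTheory Set Real

noncomputable def nestedOp (Ξ : ℝ → ℝ → ℝ) (ℓ : ℝ → ℝ) :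
    List (ℝ → ℝ) → (ℝ → ℝ) → ℝ → ℝ
  | [], u => u
  | g :: gs, u => fun s => ∫ t in (0:ℝ)..1, Ξ s t * ℓ t * g (nestedOp Ξ ℓ gs u t)

open Filter Topology Bornology Metric

theorem ContinuousMap.isCompact_closure_of_equicontinuous {X β : Type*} [TopologicalSpace X]
    [CompactSpace X] [MetricSpace β] {A : Set C(X, β)} {s : Set β} (hs : IsCompact s)
    (hA : ∀ f ∈ A, ∀ x, f x ∈ s) (H : Equicontinuous ((↑) : A → X → β)) :
    IsCompact (closure A) := by
  let e := ContinuousMap.isometryEquivBoundedOfCompact X β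
  have hrange : range (fun f : e '' A => ⇑(f : BoundedContinuousFunction X β))
      = range (fun f : A => ⇑(f : C(X, β))) := by
    ext φ; simp [e]; rfl
  have he : IsCompact (closure (e '' A)) :=
    BoundedContinuousFunction.arzela_ascoli s hs _
      (by rintro _ x ⟨f, hf, rfl⟩; exact hA f hf x)
      (equicontinuous_iff_range.2 (hrange ▸ equicontinuous_iff_range.1 H))
  rw [← IsometryEquiv.coe_toHomeomorph, ← e.toHomeomorph.image_closure] at he
  exact e.toHomeomorph.isCompact_image.1 he

theorem ContinuousMap.isBounded_image_comp {X : Type*} [TopologicalSpace X] [CompactSpace X]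
    (G : C(ℝ, ℝ)) {A : Set C(X, ℝ)} (hA : IsBounded A) : IsBounded (G.comp '' A) := by
  obtain ⟨M, hM⟩ := isBounded_iff_forall_norm_le.1 hA
  obtain ⟨C, hC⟩ := isBounded_iff_forall_norm_le.1
    ((isCompact_closedBall (0 : ℝ) M).image G.continuous).isBounded
  refine isBounded_iff_forall_norm_le.2 ⟨max C 0, ?_⟩
  rintro _ ⟨f, hf, rfl⟩
  refine (ContinuousMap.norm_le _ (le_max_right _ _)).2 fun x => (hC _ ?_).trans (le_max_left _ _)
  exact mem_image_of_mem G (mem_closedBall_zero_iff.2 ((f.norm_coe_le_norm x).trans (hM f hf)))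

theorem ContinuousMap.exists_forall_abs_sub_le_of_continuousAt {X : Type*} [TopologicalSpace X]
    [CompactSpace X] {Φ : C(X, ℝ) → C(X, ℝ)} {f : C(X, ℝ)} (hΦ : ContinuousAt Φ f) {ε : ℝ}
    (hε : 0 < ε) :
    ∃ η > 0, ∀ g : C(X, ℝ), (∀ x, |f x - g x| ≤ η) → ∀ x, |Φ f x - Φ g x| ≤ ε := by
  obtain ⟨δ, hδ, hΦδ⟩ := Metric.continuousAt_iff.1 hΦ ε hε
  refine ⟨δ / 2, half_pos hδ, fun g hg x => ?_⟩
  have hgf : dist g f < δ :=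
    ((ContinuousMap.dist_le (half_pos hδ).le).2 fun x => by
      rw [Real.dist_eq, abs_sub_comm]; exact hg x).trans_lt (half_lt_self hδ)
  rw [← Real.dist_eq, dist_comm]
  exact (ContinuousMap.dist_apply_le_dist x).trans (hΦδ hgf).le

structure DominatedKernel (X : Type*) [TopologicalSpace X] {Y : Type*} [MeasurableSpace Y]
    (μ : Measure Y) where
  toFun : X → Y → ℝ
  bound : Y → ℝ
  aestronglyMeasurable : ∀ x, AEStronglyMeasurable (toFun x) μ
  norm_le : ∀ x, ∀ᵐ y ∂μ, ‖toFun x y‖ ≤ bound y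
  integrable_bound : Integrable bound μ
  continuous : ∀ᵐ y ∂μ, Continuous (toFun · y)

namespace DominatedKernel

section IntegralOperator

variable {X Y : Type*} [TopologicalSpace X] [MeasurableSpace Y] {μ : Measure Y}
  (𝒦 : DominatedKernel X μ)

theorem integrable (x : X) : Integrable (𝒦.toFun x) μ :=
  𝒦.integrable_bound.mono' (𝒦.aestronglyMeasurable x) (𝒦.norm_le x)

theorem norm_integral_mul_le {f : Y → ℝ} {C : ℝ} (hf : ∀ᵐ y ∂μ, ‖f y‖ ≤ C) (x : X) :
    ‖∫ y, 𝒦.toFun x y * f y ∂μ‖ ≤ (∫ y, 𝒦.bound y ∂μ) * C := by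
  rw [← integral_mul_const]
  refine norm_integral_le_of_norm_le (𝒦.integrable_bound.mul_const C) ?_
  filter_upwards [𝒦.norm_le x, hf] with y hK hfy
  rw [norm_mul]
  exact mul_le_mul hK hfy (norm_nonneg _) ((norm_nonneg _).trans hK)

theorem norm_integral_mul_sub_le {f : Y → ℝ} (hf : AEStronglyMeasurable f μ) {C : ℝ}
    (hfC : ∀ᵐ y ∂μ, ‖f y‖ ≤ C) (x x' : X) :
    ‖(∫ y, 𝒦.toFun x y * f y ∂μ) - ∫ y, 𝒦.toFun x' y * f y ∂μ‖
      ≤ (∫ y, ‖𝒦.toFun x y - 𝒦.toFun x' y‖ ∂μ) * C := by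
  rw [← integral_sub ((𝒦.integrable x).mul_bdd hf hfC) ((𝒦.integrable x').mul_bdd hf hfC),
    ← integral_mul_const]
  refine norm_integral_le_of_norm_le
    (((𝒦.integrable x).sub (𝒦.integrable x')).norm.mul_const C) ?_
  filter_upwards [hfC] with y hfy
  rw [← sub_mul, norm_mul]
  exact mul_le_mul_of_nonneg_left hfy (norm_nonneg _)

variable [FirstCountableTopology X]

theorem tendsto_integral_norm_sub (x₀ : X) :
    Tendsto (fun x => ∫ y, ‖𝒦.toFun x₀ y - 𝒦.toFun x y‖ ∂μ) (𝓝 x₀) (𝓝 0) := by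
  have hcont : Continuous fun x => ∫ y, ‖𝒦.toFun x₀ y - 𝒦.toFun x y‖ ∂μ := by
    refine continuous_of_dominated (bound := fun y => 𝒦.bound y + 𝒦.bound y)
      (fun x => ((𝒦.aestronglyMeasurable x₀).sub (𝒦.aestronglyMeasurable x)).norm)
      (fun x => ?_) (𝒦.integrable_bound.add 𝒦.integrable_bound)
      (𝒦.continuous.mono fun y hy => (continuous_const.sub hy).norm)
    filter_upwards [𝒦.norm_le x₀, 𝒦.norm_le x] with y h₀ h
    rw [norm_norm]
    exact (norm_sub_le _ _).trans (add_le_add h₀ h)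
  simpa using hcont.tendsto x₀

variable [TopologicalSpace Y] [OpensMeasurableSpace Y] [CompactSpace Y]

theorem continuous_integral_mul (f : C(Y, ℝ)) :
    Continuous fun x => ∫ y, 𝒦.toFun x y * f y ∂μ := by
  refine continuous_of_dominated (bound := fun y => 𝒦.bound y * ‖f‖)
    (fun x => (𝒦.aestronglyMeasurable x).mul f.continuous.aestronglyMeasurable)
    (fun x => ?_) (𝒦.integrable_bound.mul_const _)
    (𝒦.continuous.mono fun y hy => hy.mul continuous_const)
  filter_upwards [𝒦.norm_le x] with y hK
  rw [norm_mul]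
  exact mul_le_mul hK (f.norm_coe_le_norm y) (norm_nonneg _) ((norm_nonneg _).trans hK)

variable [CompactSpace X]

noncomputable def integralOperator : C(Y, ℝ) →L[ℝ] C(X, ℝ) :=
  LinearMap.mkContinuousOfExistsBound
    { toFun := fun f => ⟨fun x => ∫ y, 𝒦.toFun x y * f y ∂μ, 𝒦.continuous_integral_mul f⟩
      map_add' := fun f g => by
        ext x
        simp only [ContinuousMap.coe_mk, ContinuousMap.add_apply, mul_add]
        exact integral_add ((𝒦.integrable x).mul_bdd f.continuous.aestronglyMeasurable
          (ae_of_all _ f.norm_coe_le_norm)) ((𝒦.integrable x).mul_bdd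
          g.continuous.aestronglyMeasurable (ae_of_all _ g.norm_coe_le_norm))
      map_smul' := fun c f => by
        ext x
        simp only [ContinuousMap.coe_mk, ContinuousMap.smul_apply, smul_eq_mul,
          RingHom.id_apply, mul_left_comm _ c, integral_const_mul] }
    -- `|·|` because `bound` need not be nonnegative when `X` is empty
    ⟨|∫ y, 𝒦.bound y ∂μ|, fun f => (ContinuousMap.norm_le _ (by positivity)).2 fun x =>
      (𝒦.norm_integral_mul_le (ae_of_all _ f.norm_coe_le_norm) x).trans
        (mul_le_mul_of_nonneg_right (le_abs_self _) (norm_nonneg _))⟩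

theorem integralOperator_apply (f : C(Y, ℝ)) (x : X) :
    𝒦.integralOperator f x = ∫ y, 𝒦.toFun x y * f y ∂μ := rfl

theorem dist_integralOperator_apply_le (f : C(Y, ℝ)) (x x' : X) :
    dist (𝒦.integralOperator f x) (𝒦.integralOperator f x')
      ≤ (∫ y, ‖𝒦.toFun x y - 𝒦.toFun x' y‖ ∂μ) * ‖f‖ :=
  𝒦.norm_integral_mul_sub_le f.continuous.aestronglyMeasurable
    (ae_of_all _ f.norm_coe_le_norm) x x'

theorem isCompactOperator_integralOperator : IsCompactOperator 𝒦.integralOperator := by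
  refine (isCompactOperator_iff_isCompact_closure_image_closedBall
    (𝒦.integralOperator : C(Y, ℝ) →ₗ[ℝ] C(X, ℝ)) one_pos).2 ?_
  refine ContinuousMap.isCompact_closure_of_equicontinuous
    (isCompact_closedBall 0 (∫ y, 𝒦.bound y ∂μ)) ?_ fun x₀ => ?_
  · rintro _ ⟨f, hf, rfl⟩ x
    rw [mem_closedBall_zero_iff, ← mul_one (∫ y, 𝒦.bound y ∂μ)]
    exact 𝒦.norm_integral_mul_le
      (ae_of_all _ fun y => (f.norm_coe_le_norm y).trans (mem_closedBall_zero_iff.1 hf)) x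
  · refine equicontinuousAt_of_continuity_modulus _ (𝒦.tendsto_integral_norm_sub x₀)
      _ (Eventually.of_forall fun x => ?_)
    rintro ⟨_, f, hf, rfl⟩
    exact (𝒦.dist_integralOperator_apply_le f x₀ x).trans
      (mul_le_of_le_one_right (integral_nonneg fun _ => norm_nonneg _)
        (mem_closedBall_zero_iff.1 hf))

end IntegralOperator

section HammersteinIter

variable {X : Type*} [TopologicalSpace X] [FirstCountableTopology X] [CompactSpace X]
  [MeasurableSpace X] [OpensMeasurableSpace X] {μ : Measure X} (𝒦 : DominatedKernel X μ)

noncomputable def hammersteinIter : List C(ℝ, ℝ) → C(X, ℝ) → C(X, ℝ)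
  | [], f => f
  | G :: Gs, f => 𝒦.integralOperator (G.comp (hammersteinIter Gs f))

theorem hammersteinIter_cons (G : C(ℝ, ℝ)) (Gs : List C(ℝ, ℝ)) :
    𝒦.hammersteinIter (G :: Gs) = 𝒦.integralOperator ∘ G.comp ∘ 𝒦.hammersteinIter Gs :=
  rfl

theorem continuous_hammersteinIter : ∀ Gs, Continuous (𝒦.hammersteinIter Gs)
  | [] => continuous_id
  | G :: Gs => 𝒦.integralOperator.continuous.comp
      ((ContinuousMap.continuous_postcomp G).comp (continuous_hammersteinIter Gs))

theorem isBounded_image_hammersteinIter {A : Set C(X, ℝ)} (hA : IsBounded A) :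
    ∀ Gs, IsBounded (𝒦.hammersteinIter Gs '' A)
  | [] => by simpa [hammersteinIter] using hA
  | G :: Gs => by
    rw [hammersteinIter_cons, image_comp, image_comp]
    exact 𝒦.integralOperator.lipschitz.isBounded_image
      (G.isBounded_image_comp (isBounded_image_hammersteinIter hA Gs))

theorem isCompact_closure_image_hammersteinIter {A : Set C(X, ℝ)} (hA : IsBounded A)
    {Gs : List C(ℝ, ℝ)} (hGs : Gs ≠ []) : IsCompact (closure (𝒦.hammersteinIter Gs '' A)) := by
  obtain ⟨G, Gs, rfl⟩ := List.exists_cons_of_ne_nil hGs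
  rw [hammersteinIter_cons, image_comp, image_comp]
  exact 𝒦.isCompactOperator_integralOperator.isCompact_closure_image_of_bounded
    (G.isBounded_image_comp (𝒦.isBounded_image_hammersteinIter hA Gs))

end HammersteinIter

end DominatedKernel

theorem monotoneOn_mul_sinh_add_mul_cosh {a b r : ℝ} (ha : 0 ≤ a) (hb : 0 ≤ b) (hr : 0 ≤ r) :
    MonotoneOn (fun x => a * sinh (r * x) + b * r * cosh (r * x)) (Ici 0) := by
  intro x hx y hy hxy
  have hrx : r * x ≤ r * y := mul_le_mul_of_nonneg_left hxy hr
  have h0 : 0 ≤ r * x := mul_nonneg hr hx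
  have hsinh : sinh (r * x) ≤ sinh (r * y) := sinh_le_sinh.2 hrx
  have hcosh : cosh (r * x) ≤ cosh (r * y) :=
    cosh_le_cosh.2 (by rwa [abs_of_nonneg h0, abs_of_nonneg (h0.trans hrx)])
  dsimp only
  gcongr

theorem abs_le_abs_diag_of_separated {Ξ : ℝ → ℝ → ℝ} {c : ℝ} {P Q : ℝ → ℝ}
    (hP : MonotoneOn P (Icc 0 1)) (hP0 : 0 ≤ P 0) (hQ : MonotoneOn Q (Icc 0 1)) (hQ0 : 0 ≤ Q 0)
    (hΞ : ∀ s t, Ξ s t = c * P (min s t) * Q (1 - max s t)) {s t : ℝ} (hs : s ∈ Icc (0:ℝ) 1)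
    (ht : t ∈ Icc (0:ℝ) 1) : |Ξ s t| ≤ |Ξ t t| := by
  have h0 : (0:ℝ) ∈ Icc (0:ℝ) 1 := left_mem_Icc.2 zero_le_one
  have hmin : min s t ∈ Icc (0:ℝ) 1 := ⟨le_min hs.1 ht.1, (min_le_right _ _).trans ht.2⟩
  have hmax : 1 - max s t ∈ Icc (0:ℝ) 1 :=
    ⟨sub_nonneg.2 (max_le hs.2 ht.2), by linarith [le_max_right s t, ht.1]⟩
  have h1t : 1 - t ∈ Icc (0:ℝ) 1 := ⟨by linarith [ht.2], by linarith [ht.1]⟩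
  have hPm : 0 ≤ P (min s t) := hP0.trans (hP h0 hmin hmin.1)
  have hQm : 0 ≤ Q (1 - max s t) := hQ0.trans (hQ h0 hmax hmax.1)
  have hPt : P (min s t) ≤ P t := hP hmin ht (min_le_right s t)
  have hQt : Q (1 - max s t) ≤ Q (1 - t) := hQ hmax h1t (by linarith [le_max_right s t])
  rw [hΞ, hΞ, min_self, max_self, abs_mul, abs_mul, abs_mul, abs_mul, abs_of_nonneg hPm,
    abs_of_nonneg hQm, abs_of_nonneg (hPm.trans hPt), abs_of_nonneg (hQm.trans hQt)]
  exact mul_le_mul (mul_le_mul_of_nonneg_left hPt (abs_nonneg c)) hQt hQm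
    (mul_nonneg (abs_nonneg c) (hPm.trans hPt))

theorem aemeasurable_mul_rpow_mul_prod {m : ℕ} {ℓi : Fin m → ℝ → ℝ}
    (hℓi : ∀ i, Measurable ((Ioc (0:ℝ) 1).domRestrict (ℓi i))) (c p : ℝ) :
    AEMeasurable (fun s => c * s ^ p * ∏ i, ℓi i s) (volume.restrict (Icc 0 1)) := by
  rw [← Measure.restrict_congr_set Ioc_ae_eq_Icc]
  have hi : ∀ i, AEMeasurable (ℓi i) (volume.restrict (Ioc 0 1)) := fun i =>
    (aemeasurable_restrict_iff_comap_subtype measurableSet_Ioc).2 (hℓi i).aemeasurable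
  exact (aemeasurable_const.mul (measurable_id.pow_const p).aemeasurable).mul
    (Finset.aemeasurable_fun_prod _ fun i _ => hi i)

theorem exists_dominatedKernel_Icc {Ξ : ℝ → ℝ → ℝ} {ℓ : ℝ → ℝ}
    (hΞ : Continuous fun p : ℝ × ℝ => Ξ p.1 p.2)
    (hdiag : ∀ s ∈ Icc (0:ℝ) 1, ∀ t ∈ Icc (0:ℝ) 1, |Ξ s t| ≤ |Ξ t t|)
    (hℓ : AEMeasurable ℓ (volume.restrict (Icc 0 1)))
    (hint : IntegrableOn (fun t => Ξ t t * ℓ t) (Ioo 0 1)) :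
    ∃ 𝒦 : DominatedKernel (Icc (0:ℝ) 1) (volume : Measure (Icc (0:ℝ) 1)),
      ∀ s t : Icc (0:ℝ) 1, 𝒦.toFun s t = Ξ s t * ℓ t := by
  have hℓ' : AEMeasurable (fun t : Icc (0:ℝ) 1 => ℓ t) volume := by
    rw [volume_set_coe_def]
    exact (aemeasurable_restrict_iff_comap_subtype measurableSet_Icc).1 hℓ
  have hint' : Integrable (fun t : Icc (0:ℝ) 1 => Ξ t t * ℓ t) volume := by
    rw [volume_set_coe_def]
    exact (integrableOn_iff_comap_subtypeVal measurableSet_Icc).1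
      ((integrableOn_Icc_iff_integrableOn_Ioo ..).2 hint)
  refine ⟨⟨fun s t => Ξ s t * ℓ t, fun t => |Ξ t t * ℓ t|, fun s => ?_, fun s => ?_, hint'.abs,
    ae_of_all _ fun t => ?_⟩, fun _ _ => rfl⟩
  · exact (hΞ.comp (continuous_const.prodMk continuous_subtype_val)).aestronglyMeasurable.mul
      hℓ'.aestronglyMeasurable
  · refine ae_of_all _ fun t => ?_
    rw [Real.norm_eq_abs, abs_mul, abs_mul]
    exact mul_le_mul_of_nonneg_right (hdiag s s.2 t t.2) (abs_nonneg _)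
  · exact (hΞ.comp (continuous_subtype_val.prodMk continuous_const)).mul continuous_const

theorem nestedOp_eq_hammersteinIter {Ξ : ℝ → ℝ → ℝ} {ℓ : ℝ → ℝ}
    (𝒦 : DominatedKernel (Icc (0:ℝ) 1) (volume : Measure (Icc (0:ℝ) 1)))
    (h𝒦 : ∀ s t : Icc (0:ℝ) 1, 𝒦.toFun s t = Ξ s t * ℓ t) {u : ℝ → ℝ}
    (hu : ContinuousOn u (Icc 0 1)) :
    ∀ (Gs : List C(ℝ, ℝ)) (s : ℝ) (hs : s ∈ Icc (0:ℝ) 1), nestedOp Ξ ℓ (Gs.map (⇑)) u s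
      = 𝒦.hammersteinIter Gs ⟨(Icc 0 1).domRestrict u, hu.domRestrict⟩ ⟨s, hs⟩
  | [], _, _ => rfl
  | G :: Gs, s, hs => by
    rw [List.map_cons, nestedOp, DominatedKernel.hammersteinIter,
      DominatedKernel.integralOperator_apply]
    beta_reduce
    rw [intervalIntegral.integral_of_le zero_le_one,
      ← integral_Icc_eq_integral_Ioc, ← integral_subtype_comap measurableSet_Icc,
      ← volume_set_coe_def]
    refine integral_congr_ae (ae_of_all _ fun t => ?_)
    simp only [h𝒦, ContinuousMap.comp_apply, nestedOp_eq_hammersteinIter 𝒦 h𝒦 hu Gs t t.2]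

theorem stmt5_general
    (r0 α β γ δ : ℝ)
    (hr0 : 0 < r0) (hα : 0 ≤ α) (hβ : 0 ≤ β) (hγ : 0 ≤ γ) (hδ : 0 ≤ δ)
    (ϱ : ℝ)
    (Ξ : ℝ → ℝ → ℝ)
    (hΞ : ∀ s t : ℝ, Ξ s t =
      (1 / ϱ) * (α * Real.sinh (r0 * min s t) + β * r0 * Real.cosh (r0 * min s t))
              * (γ * Real.sinh (r0 * (1 - max s t)) + δ * r0 * Real.cosh (r0 * (1 - max s t))))
    (℘ : ℝ)
    (N : ℕ) (n m : ℕ) [NeZero n]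
    (ℓi : Fin m → ℝ → ℝ)
    (hℓmeas : ∀ i, Measurable ((Set.Ioc (0:ℝ) 1).restrict (ℓi i)))
    (ℓ : ℝ → ℝ)
    (hℓ : ∀ s : ℝ, ℓ s = r0 ^ 2 / ((N : ℝ) - 2) ^ 2
            * s ^ ((2 * ((N : ℝ) - 1)) / (2 - (N : ℝ))) * ∏ i, ℓi i s)
    (g : Fin n → ℝ → ℝ)
    (hgcont : ∀ ι, Continuous (g ι))
    (hint : MeasureTheory.IntegrableOn (fun t => Ξ t t * ℓ t) (Set.Ioo (0:ℝ) 1)) :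
    (∀ u₁ : ℝ → ℝ,
      (ContinuousOn u₁ (Set.Icc (0:ℝ) 1) ∧
      (∀ s ∈ Set.Icc (0:ℝ) 1, 0 ≤ u₁ s) ∧
      (∀ s ∈ Set.Icc (0:ℝ) 1, ℘ * sSup ((fun t => |u₁ t|) '' Set.Icc (0:ℝ) 1) ≤ u₁ s)) →
      ∀ ε > (0:ℝ), ∃ η > (0:ℝ), ∀ v₁ : ℝ → ℝ,
        (ContinuousOn v₁ (Set.Icc (0:ℝ) 1) ∧
      (∀ s ∈ Set.Icc (0:ℝ) 1, 0 ≤ v₁ s) ∧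
      (∀ s ∈ Set.Icc (0:ℝ) 1, ℘ * sSup ((fun t => |v₁ t|) '' Set.Icc (0:ℝ) 1) ≤ v₁ s)) →
        (∀ s ∈ Set.Icc (0:ℝ) 1, |u₁ s - v₁ s| ≤ η) →
        ∀ s ∈ Set.Icc (0:ℝ) 1,
          |nestedOp Ξ ℓ (List.ofFn g) u₁ s - nestedOp Ξ ℓ (List.ofFn g) v₁ s| ≤ ε) ∧
    (∀ M : ℝ, IsCompact (closure { f : C(↥(Set.Icc (0:ℝ) 1), ℝ) |
        ∃ u₁ : ℝ → ℝ,
          (ContinuousOn u₁ (Set.Icc (0:ℝ) 1) ∧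
      (∀ s ∈ Set.Icc (0:ℝ) 1, 0 ≤ u₁ s) ∧
      (∀ s ∈ Set.Icc (0:ℝ) 1, ℘ * sSup ((fun t => |u₁ t|) '' Set.Icc (0:ℝ) 1) ≤ u₁ s)) ∧
          (∀ s ∈ Set.Icc (0:ℝ) 1, |u₁ s| ≤ M) ∧
          ∀ s : ↥(Set.Icc (0:ℝ) 1), f s = nestedOp Ξ ℓ (List.ofFn g) u₁ (s : ℝ) })) := by
  have hdiag : ∀ s ∈ Icc (0:ℝ) 1, ∀ t ∈ Icc (0:ℝ) 1, |Ξ s t| ≤ |Ξ t t| := fun s hs t ht =>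
    abs_le_abs_diag_of_separated
      ((monotoneOn_mul_sinh_add_mul_cosh hα hβ hr0.le).mono Icc_subset_Ici_self)
      (by simpa using mul_nonneg hβ hr0.le)
      ((monotoneOn_mul_sinh_add_mul_cosh hγ hδ hr0.le).mono Icc_subset_Ici_self)
      (by simpa using mul_nonneg hδ hr0.le) hΞ hs ht
  obtain ⟨𝒦, h𝒦⟩ := exists_dominatedKernel_Icc (by simp only [hΞ]; fun_prop) hdiag
    (funext hℓ ▸ aemeasurable_mul_rpow_mul_prod hℓmeas _ _) hint
  set Gs := List.ofFn fun ι => (⟨g ι, hgcont ι⟩ : C(ℝ, ℝ))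
  have hGs : List.ofFn g = Gs.map (⇑) := by rw [List.map_ofFn]; rfl
  set Φ := 𝒦.hammersteinIter Gs
  have hΦ : ∀ {u} (hu : ContinuousOn u (Icc 0 1)) s (hs : s ∈ Icc (0:ℝ) 1),
      nestedOp Ξ ℓ (List.ofFn g) u s = Φ ⟨(Icc 0 1).domRestrict u, hu.domRestrict⟩ ⟨s, hs⟩ :=
    fun hu => hGs ▸ nestedOp_eq_hammersteinIter 𝒦 h𝒦 hu Gs
  refine ⟨fun u₁ hu₁ ε hε => ?_, fun M => ?_⟩
  · obtain ⟨η, hη, hΦη⟩ := ContinuousMap.exists_forall_abs_sub_le_of_continuousAt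
      ((𝒦.continuous_hammersteinIter Gs).continuousAt (x := ⟨_, hu₁.1.domRestrict⟩)) hε
    refine ⟨η, hη, fun v₁ hv₁ huv s hs => ?_⟩
    rw [hΦ hu₁.1 s hs, hΦ hv₁.1 s hs]
    exact hΦη ⟨_, hv₁.1.domRestrict⟩ (fun x => huv x x.2) ⟨s, hs⟩
  · have hA : IsBounded {f : C(Icc (0:ℝ) 1, ℝ) | ∀ x, |f x| ≤ M} :=
      isBounded_iff_forall_norm_le.2 ⟨max M 0, fun f hf =>
        (ContinuousMap.norm_le _ (le_max_right _ _)).2 fun x => (hf x).trans (le_max_left _ _)⟩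
    refine (𝒦.isCompact_closure_image_hammersteinIter hA (Gs := Gs)
      (by simp [Gs, NeZero.ne n])).of_isClosed_subset isClosed_closure (closure_mono ?_)
    rintro f ⟨u₁, hu₁, hM, hf⟩
    refine ⟨⟨_, hu₁.1.domRestrict⟩, fun x => hM x x.2, ?_⟩
    ext s
    rw [hf s, hΦ hu₁.1 s s.2]

theorem stmt5
    (r0 α β γ δ : ℝ)
    (hr0 : 0 < r0) (hα : 0 ≤ α) (hβ : 0 ≤ β) (hγ : 0 ≤ γ) (hδ : 0 ≤ δ)
    (hαβ : 0 < α + β) (hγδ : 0 < γ + δ)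
    (ϱ : ℝ)
    (hϱ : ϱ = r0 ^ 2 * (α * δ + β * γ) * Real.cosh r0
            + r0 * (α * γ + β * δ * r0 ^ 2) * Real.sinh r0)
    (Ξ : ℝ → ℝ → ℝ)
    (hΞ : ∀ s t : ℝ, Ξ s t =
      (1 / ϱ) * (α * Real.sinh (r0 * min s t) + β * r0 * Real.cosh (r0 * min s t))
              * (γ * Real.sinh (r0 * (1 - max s t)) + δ * r0 * Real.cosh (r0 * (1 - max s t))))
    (℘ : ℝ)
    (h℘ : ℘ = max (β * r0 / (α * Real.sinh r0 + β * r0 * Real.cosh r0))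
                  (δ * r0 / (γ * Real.sinh r0 + δ * r0 * Real.cosh r0)))
    (N : ℕ) (hN : 2 < N) (n m : ℕ) [NeZero n] (hm : 1 ≤ m)
    (ℓi : Fin m → ℝ → ℝ)
    (hℓmeas : ∀ i, Measurable ((Set.Ioc (0:ℝ) 1).restrict (ℓi i)))
    (hℓpos : ∀ i, ∀ s ∈ Set.Ioc (0:ℝ) 1, 0 < ℓi i s)
    (ℓ : ℝ → ℝ)
    (hℓ : ∀ s : ℝ, ℓ s = r0 ^ 2 / ((N : ℝ) - 2) ^ 2
            * s ^ ((2 * ((N : ℝ) - 1)) / (2 - (N : ℝ))) * ∏ i, ℓi i s)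
    (g : Fin n → ℝ → ℝ)
    (hgcont : ∀ ι, Continuous (g ι))
    (hgnonneg : ∀ ι, ∀ u : ℝ, 0 ≤ u → 0 ≤ g ι u)
    (hint : MeasureTheory.IntegrableOn (fun t => Ξ t t * ℓ t) (Set.Ioo (0:ℝ) 1)) :
    (∀ u₁ : ℝ → ℝ,
      (ContinuousOn u₁ (Set.Icc (0:ℝ) 1) ∧
      (∀ s ∈ Set.Icc (0:ℝ) 1, 0 ≤ u₁ s) ∧
      (∀ s ∈ Set.Icc (0:ℝ) 1, ℘ * sSup ((fun t => |u₁ t|) '' Set.Icc (0:ℝ) 1) ≤ u₁ s)) →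
      ∀ ε > (0:ℝ), ∃ η > (0:ℝ), ∀ v₁ : ℝ → ℝ,
        (ContinuousOn v₁ (Set.Icc (0:ℝ) 1) ∧
      (∀ s ∈ Set.Icc (0:ℝ) 1, 0 ≤ v₁ s) ∧
      (∀ s ∈ Set.Icc (0:ℝ) 1, ℘ * sSup ((fun t => |v₁ t|) '' Set.Icc (0:ℝ) 1) ≤ v₁ s)) →
        (∀ s ∈ Set.Icc (0:ℝ) 1, |u₁ s - v₁ s| ≤ η) →
        ∀ s ∈ Set.Icc (0:ℝ) 1,
          |nestedOp Ξ ℓ (List.ofFn g) u₁ s - nestedOp Ξ ℓ (List.ofFn g) v₁ s| ≤ ε) ∧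
    (∀ M : ℝ, IsCompact (closure { f : C(↥(Set.Icc (0:ℝ) 1), ℝ) |
        ∃ u₁ : ℝ → ℝ,
          (ContinuousOn u₁ (Set.Icc (0:ℝ) 1) ∧
      (∀ s ∈ Set.Icc (0:ℝ) 1, 0 ≤ u₁ s) ∧
      (∀ s ∈ Set.Icc (0:ℝ) 1, ℘ * sSup ((fun t => |u₁ t|) '' Set.Icc (0:ℝ) 1) ≤ u₁ s)) ∧
          (∀ s ∈ Set.Icc (0:ℝ) 1, |u₁ s| ≤ M) ∧
          ∀ s : ↥(Set.Icc (0:ℝ) 1), f s = nestedOp Ξ ℓ (List.ofFn g) u₁ (s : ℝ) })) :=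
  stmt5_general r0 α β γ δ hr0 hα hβ hγ hδ ϱ Ξ hΞ ℘ N n m ℓi hℓmeas ℓ hℓ g hgcont hint
end

section
/- (Rus's fixed point theorem.) Let X be a nonempty set equipped with two metrics d and ρ such that (X, d) is a complete metric space. Let Λ : X → X be continuous with respect to d. Suppose there exists α₁ > 0 such that d(Λx, Λy) ≤ α₁·ρ(x, y) for all x, y ∈ X, and there exists α₂ with 0 < α₂ < 1 such that ρ(Λx, Λy) ≤ α₂·ρ(x, y) for all x, y ∈ X. Then there is a unique x* ∈ X with Λx* = x*. -/
/-!
Iterating `Λ` from any point, `ρ` shrinks along the orbit geometrically, and the `d`-steps are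
bounded by `α₁` times the `ρ`-steps; so the orbit is `d`-Cauchy, and by `d`-completeness and
`d`-continuity its limit is a fixed point. Uniqueness only needs that `Λ` is a `ρ`-contraction.
-/

open Function

lemma nonneg_of_dist_axioms {X : Type*} {ρ : X → X → ℝ} (hρ0 : ∀ x, ρ x x = 0)
    (hρsymm : ∀ x y, ρ x y = ρ y x) (hρtri : ∀ x y z, ρ x z ≤ ρ x y + ρ y z) (x y : X) :
    0 ≤ ρ x y := by
  have := hρtri x y x
  rw [hρ0, hρsymm y x] at this
  linarith

abbrev metricSpaceOfDist {X : Type*} (d : X → X → ℝ) (hd0 : ∀ x y, d x y = 0 ↔ x = y)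
    (hdsymm : ∀ x y, d x y = d y x) (hdtri : ∀ x y z, d x z ≤ d x y + d y z) : MetricSpace X where
  dist := d
  dist_self x := (hd0 x x).2 rfl
  dist_comm := hdsymm
  dist_triangle := hdtri
  eq_of_dist_eq_zero := (hd0 _ _).1

lemma iterate_le_pow_mul {X : Type*} {f : X → X} {ρ : X → X → ℝ} {α : ℝ} (hα : 0 ≤ α)
    (hf : ∀ x y, ρ (f x) (f y) ≤ α * ρ x y) (x : X) (n : ℕ) :
    ρ (f^[n] x) (f^[n + 1] x) ≤ α ^ n * ρ x (f x) := by
  induction n with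
  | zero => simp
  | succ n ih =>
    calc ρ (f^[n + 1] x) (f^[n + 2] x)
        = ρ (f (f^[n] x)) (f (f^[n + 1] x)) := by
          simp only [iterate_succ_apply']
      _ ≤ α * ρ (f^[n] x) (f^[n + 1] x) := hf _ _
      _ ≤ α * (α ^ n * ρ x (f x)) := mul_le_mul_of_nonneg_left ih hα
      _ = α ^ (n + 1) * ρ x (f x) := by ring

section Rus

variable {X : Type*} [MetricSpace X] {f : X → X} (ρ : X → X → ℝ) {α₁ α₂ : ℝ}

lemma cauchySeq_iterate_of_rus (hα₁ : 0 ≤ α₁) (hα₂0 : 0 ≤ α₂) (hα₂1 : α₂ < 1)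
    (h1 : ∀ x y, dist (f x) (f y) ≤ α₁ * ρ x y) (h2 : ∀ x y, ρ (f x) (f y) ≤ α₂ * ρ x y)
    (x : X) : CauchySeq fun n => f^[n] (f x) := by
  refine cauchySeq_of_le_geometric α₂ (α₁ * ρ x (f x)) hα₂1 fun n => ?_
  calc dist (f^[n] (f x)) (f^[n + 1] (f x))
      = dist (f (f^[n] x)) (f (f^[n + 1] x)) := by
        simp only [← iterate_succ_apply, iterate_succ_apply']
    _ ≤ α₁ * ρ (f^[n] x) (f^[n + 1] x) := h1 _ _
    _ ≤ α₁ * (α₂ ^ n * ρ x (f x)) :=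
        mul_le_mul_of_nonneg_left (iterate_le_pow_mul hα₂0 h2 x n) hα₁
    _ = α₁ * ρ x (f x) * α₂ ^ n := by ring

theorem exists_isFixedPt_of_rus [CompleteSpace X] [Nonempty X] (hf : Continuous f)
    (hα₁ : 0 ≤ α₁) (hα₂0 : 0 ≤ α₂) (hα₂1 : α₂ < 1)
    (h1 : ∀ x y, dist (f x) (f y) ≤ α₁ * ρ x y) (h2 : ∀ x y, ρ (f x) (f y) ≤ α₂ * ρ x y) :
    ∃ y, IsFixedPt f y := by
  obtain ⟨x⟩ := ‹Nonempty X›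
  obtain ⟨y, hy⟩ :=
    cauchySeq_tendsto_of_complete (cauchySeq_iterate_of_rus ρ hα₁ hα₂0 hα₂1 h1 h2 x)
  exact ⟨y, isFixedPt_of_tendsto_iterate hy hf.continuousAt⟩

end Rus

lemma Function.IsFixedPt.eq_of_contraction {X : Type*} {f : X → X} {ρ : X → X → ℝ} {α : ℝ}
    (hρ0 : ∀ x y, ρ x y = 0 → x = y) (hρnn : ∀ x y, 0 ≤ ρ x y) (hα : α < 1)
    (hf : ∀ x y, ρ (f x) (f y) ≤ α * ρ x y) {x y : X} (hx : IsFixedPt f x) (hy : IsFixedPt f y) :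
    x = y := by
  have hle := hf x y
  rw [hx.eq, hy.eq] at hle
  exact hρ0 x y (by nlinarith [hρnn x y])

theorem stmt16
    {X : Type*} [Nonempty X]
    (d ρ : X → X → ℝ)
    (hd0 : ∀ x y, d x y = 0 ↔ x = y)
    (hdsymm : ∀ x y, d x y = d y x)
    (hdtri : ∀ x y z, d x z ≤ d x y + d y z)
    (hρ0 : ∀ x y, ρ x y = 0 ↔ x = y)
    (hρsymm : ∀ x y, ρ x y = ρ y x)
    (hρtri : ∀ x y z, ρ x z ≤ ρ x y + ρ y z)
    (hcomplete : ∀ x : ℕ → X,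
      (∀ ε > (0:ℝ), ∃ M : ℕ, ∀ i ≥ M, ∀ j ≥ M, d (x i) (x j) < ε) →
      ∃ l : X, ∀ ε > (0:ℝ), ∃ M : ℕ, ∀ i ≥ M, d (x i) l < ε)
    (Λ : X → X)
    (hΛcont : ∀ x : X, ∀ ε > (0:ℝ), ∃ η > (0:ℝ), ∀ y : X, d x y < η → d (Λ x) (Λ y) < ε)
    (α₁ : ℝ) (hα₁ : 0 < α₁)
    (h1 : ∀ x y : X, d (Λ x) (Λ y) ≤ α₁ * ρ x y)
    (α₂ : ℝ) (hα₂0 : 0 < α₂) (hα₂1 : α₂ < 1)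
    (h2 : ∀ x y : X, ρ (Λ x) (Λ y) ≤ α₂ * ρ x y) :
    ∃! x : X, Λ x = x := by
  let := metricSpaceOfDist d hd0 hdsymm hdtri
  have : CompleteSpace X := Metric.complete_of_cauchySeq_tendsto fun u hu => by
    simp only [Metric.tendsto_atTop]
    exact hcomplete u (Metric.cauchySeq_iff.1 hu)
  have hΛ : Continuous Λ := Metric.continuous_iff.2 fun x ε hε => by
    obtain ⟨η, hη, hΛη⟩ := hΛcont x ε hε
    exact ⟨η, hη, fun y hy => by
      rw [dist_comm] at hy ⊢
      exact hΛη y hy⟩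
  obtain ⟨x, hx⟩ := exists_isFixedPt_of_rus ρ hΛ hα₁.le hα₂0.le hα₂1 h1 h2
  have hρnn := nonneg_of_dist_axioms (fun x => (hρ0 x x).2 rfl) hρsymm hρtri
  exact ⟨x, hx, fun y hy =>
    IsFixedPt.eq_of_contraction (fun x y => (hρ0 x y).1) hρnn hα₂1 h2 hy hx⟩
end
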